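/- arXiv:1203.4635 — 5 statements merged into one kernel-verified Lean document; each statement's English description precedes it below -/
import Mathlib

section
/- Let $L_0$ be a real symmetric $n\times n$ matrix and $g$ a real-valued function on $\sigma(L_0)$. Define $L(t) = Q(t)^T L_0 Q(t)$ where $e^{tg(L_0)} = Q(t)R(t)$ is the QR factorization with $R(t)$ having positive diagonal. Then at integer times $m = 0,1,2,\ldots$, the matrix $e^{g(L(m))}$ equals the $m$-th iterate $M_m$ of the unshifted QR algorithm applied to $M_0 = e^{g(L_0)}$, where $M_{m+1} = R_m Q_m$ for the QR factorization $Q_m R_m = M_m$. -/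
/-!
Iterating the QR step `M = Q R ↦ R Q = Qᵀ M Q` shows that after `m` steps
`M_m = Pᵀ M₀ P` and `M₀ ^ m = P S`, where `P` is the product of the orthogonal factors and `S` the
reversed product of the triangular ones. Since `e^{m g(L₀)} = M₀ ^ m`, uniqueness of the QR
factorization identifies `Q(m)` with `P`, and conjugation commutes with the exponential.
-/

open Matrix

namespace Matrix

variable {ι K : Type*} [Fintype ι] [LinearOrder ι]

theorem IsUpperTriangular.mul_apply_self {R : Type*} [NonUnitalNonAssocSemiring R]
    {A B : Matrix ι ι R} (hA : A.IsUpperTriangular) (hB : B.IsUpperTriangular) (i : ι) :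
    (A * B) i i = A i i * B i i := by
  rw [mul_apply, Finset.sum_eq_single i]
  · intro j _ hji
    rcases hji.lt_or_gt with hlt | hlt
    · rw [hA hlt, zero_mul]
    · rw [hB hlt, mul_zero]
  · simp

theorem IsUpperTriangular.inv {R : Type*} [CommRing R] {A : Matrix ι ι R}
    (hA : A.IsUpperTriangular) : A⁻¹.IsUpperTriangular := by
  by_cases hdet : IsUnit A.det
  · have : Invertible A := A.invertibleOfIsUnitDet hdet
    exact blockTriangular_inv_of_blockTriangular hA
  · rw [nonsing_inv_apply_not_isUnit A hdet]
    exact blockTriangular_zero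

theorem IsUpperTriangular.inv_apply_self [Field K] {A : Matrix ι ι K}
    (hA : A.IsUpperTriangular) (hdet : IsUnit A.det) (i : ι) : A⁻¹ i i = (A i i)⁻¹ := by
  refine (inv_eq_of_mul_eq_one_right ?_).symm
  rw [← hA.mul_apply_self hA.inv, mul_nonsing_inv A hdet, one_apply_eq]

variable (ι K)

def upperTriangularPosDiag [CommRing K] [PartialOrder K] [IsStrictOrderedRing K] :
    Submonoid (Matrix ι ι K) where
  carrier := {A | A.IsUpperTriangular ∧ ∀ i, 0 < A i i}
  one_mem' := ⟨blockTriangular_one, fun i => by simp⟩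
  mul_mem' := fun {A B} ⟨hA, hAd⟩ ⟨hB, hBd⟩ =>
    ⟨hA.mul hB, fun i => by rw [hA.mul_apply_self hB]; exact mul_pos (hAd i) (hBd i)⟩

variable {ι K} [Field K] [LinearOrder K] [IsStrictOrderedRing K]

theorem isUnit_det_of_mem_upperTriangularPosDiag {A : Matrix ι ι K}
    (hA : A ∈ upperTriangularPosDiag ι K) : IsUnit A.det := by
  rw [det_of_isUpperTriangular hA.1, isUnit_iff_ne_zero]
  exact (Finset.prod_pos fun i _ => hA.2 i).ne'

theorem inv_mem_upperTriangularPosDiag {A : Matrix ι ι K}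
    (hA : A ∈ upperTriangularPosDiag ι K) : A⁻¹ ∈ upperTriangularPosDiag ι K :=
  ⟨hA.1.inv, fun i => by
    rw [hA.1.inv_apply_self (isUnit_det_of_mem_upperTriangularPosDiag hA)]
    exact inv_pos.mpr (hA.2 i)⟩

/-- Its inverse `Aᵀ` is upper triangular too, so `A` is diagonal with `A i i ^ 2 = 1`. -/
theorem eq_one_of_mem_upperTriangularPosDiag_of_mul_transpose_eq_one {A : Matrix ι ι K}
    (hA : A ∈ upperTriangularPosDiag ι K) (hAA : A * Aᵀ = 1) : A = 1 := by
  have hinv : A⁻¹ = Aᵀ := inv_eq_right_inv hAA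
  have hdiag : ∀ i, A i i = 1 := fun i => by
    have hsq : A i i * A i i = 1 := by
      have := hA.1.inv_apply_self (isUnit_det_of_mem_upperTriangularPosDiag hA) i
      rw [hinv, transpose_apply] at this
      nth_rw 2 [this]
      exact mul_inv_cancel₀ (hA.2 i).ne'
    rcases mul_self_eq_one_iff.mp hsq with h | h
    · exact h
    · linarith [hA.2 i]
  ext i j
  rcases lt_trichotomy i j with hij | rfl | hij
  · have := hA.1.inv hij
    rw [hinv, transpose_apply] at this
    rw [this, one_apply_ne hij.ne]
  · rw [hdiag, one_apply_eq]
  · rw [hA.1 hij, one_apply_ne hij.ne']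

theorem eq_of_mul_eq_mul_of_mem_upperTriangularPosDiag {Q₁ R₁ Q₂ R₂ : Matrix ι ι K}
    (h : Q₁ * R₁ = Q₂ * R₂) (hQ₁ : Q₁ * Q₁ᵀ = 1) (hQ₂ : Q₂ * Q₂ᵀ = 1)
    (hR₁ : R₁ ∈ upperTriangularPosDiag ι K) (hR₂ : R₂ ∈ upperTriangularPosDiag ι K) :
    Q₁ = Q₂ := by
  have hQ₂' : Q₂ᵀ * Q₂ = 1 := mul_eq_one_comm.mp hQ₂
  have hA : Q₂ᵀ * Q₁ = R₂ * R₁⁻¹ := by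
    rw [← mul_nonsing_inv_cancel_right R₁ (Q₂ᵀ * Q₁)
      (isUnit_det_of_mem_upperTriangularPosDiag hR₁), mul_assoc Q₂ᵀ, h, ← mul_assoc, hQ₂',
      one_mul]
  have hA1 : Q₂ᵀ * Q₁ = 1 := by
    refine eq_one_of_mem_upperTriangularPosDiag_of_mul_transpose_eq_one ?_ ?_
    · rw [hA]
      exact Submonoid.mul_mem _ hR₂ (inv_mem_upperTriangularPosDiag hR₁)
    · rw [transpose_mul, transpose_transpose, mul_assoc, ← mul_assoc Q₁, hQ₁, one_mul, hQ₂']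
  rw [← one_mul Q₁, ← hQ₂, mul_assoc, hA1, mul_one]

end Matrix
theorem qr_step_eq_transpose_mul_mul {ι R : Type*} [Fintype ι] [DecidableEq ι] [CommRing R]
    {M Q S : Matrix ι ι R} (hM : M = Q * S) (hQ : Q * Qᵀ = 1) : S * Q = Qᵀ * M * Q := by
  rw [hM, ← mul_assoc, mul_eq_one_comm.mp hQ, one_mul]

theorem qr_algorithm_accumulated {ι K : Type*} [Fintype ι] [LinearOrder ι] [Field K]
    [LinearOrder K] [IsStrictOrderedRing K] {M Qm Rm : ℕ → Matrix ι ι K}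
    (hfac : ∀ m, M m = Qm m * Rm m) (hQm : ∀ m, Qm m * (Qm m)ᵀ = 1)
    (hRm : ∀ m, Rm m ∈ upperTriangularPosDiag ι K) (hstep : ∀ m, M (m + 1) = Rm m * Qm m)
    (m : ℕ) :
    ∃ P S, P * Pᵀ = 1 ∧ S ∈ upperTriangularPosDiag ι K ∧ M 0 ^ m = P * S ∧
      M m = Pᵀ * M 0 * P := by
  induction m with
  | zero => exact ⟨1, 1, by simp, Submonoid.one_mem _, by simp, by simp⟩
  | succ m ih =>
    obtain ⟨P, S, hP, hS, hpow, hconj⟩ := ih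
    refine ⟨P * Qm m, Rm m * S, ?_, Submonoid.mul_mem _ (hRm m) hS, ?_, ?_⟩
    · rw [transpose_mul, mul_assoc, ← mul_assoc (Qm m), hQm m, one_mul, hP]
    · have hintertwine : M 0 * P = P * M m := by
        rw [hconj, ← mul_assoc, ← mul_assoc, hP, one_mul]
      rw [pow_succ', hpow, ← mul_assoc, hintertwine, hfac m]
      simp only [mul_assoc]
    · rw [hstep m, qr_step_eq_transpose_mul_mul (hfac m) (hQm m), hconj, transpose_mul]
      simp only [mul_assoc]

theorem exp_transpose_mul_mul {ι 𝔸 : Type*} [Fintype ι] [DecidableEq ι] [NormedCommRing 𝔸]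
    [NormedAlgebra ℚ 𝔸] [CompleteSpace 𝔸] {P : Matrix ι ι 𝔸} (hP : P * Pᵀ = 1)
    (A : Matrix ι ι 𝔸) : NormedSpace.exp (Pᵀ * A * P) = Pᵀ * NormedSpace.exp A * P := by
  have hinv : P⁻¹ = Pᵀ := inv_eq_right_inv hP
  rw [← hinv, exp_conj' P A (IsUnit.of_mul_eq_one Pᵀ hP)]

theorem qr_flow_interpolates_qr_algorithm_general {n : ℕ}
    (gL₀ : Matrix (Fin n) (Fin n) ℝ)
    -- the QR factorization of the flow `e^{t g(L₀)}`
    (Q R : ℝ → Matrix (Fin n) (Fin n) ℝ)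
    (hQR : ∀ t : ℝ, 0 ≤ t → NormedSpace.exp (t • gL₀) = Q t * R t)
    (hQ : ∀ t : ℝ, 0 ≤ t → Q t * (Q t)ᵀ = 1)
    (hR : ∀ t : ℝ, 0 ≤ t → (R t).BlockTriangular id ∧ ∀ i, 0 < R t i i)
    -- the unshifted QR algorithm applied to `M₀ = e^{g(L₀)}`
    (M Qm Rm : ℕ → Matrix (Fin n) (Fin n) ℝ)
    (hM0 : M 0 = NormedSpace.exp gL₀)
    (hfac : ∀ m : ℕ, M m = Qm m * Rm m)
    (hQm : ∀ m : ℕ, Qm m * (Qm m)ᵀ = 1)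
    (hRm : ∀ m : ℕ, (Rm m).BlockTriangular id ∧ ∀ i, 0 < Rm m i i)
    (hstep : ∀ m : ℕ, M (m + 1) = Rm m * Qm m) :
    -- since `L(m) = Q(m)ᵀ L₀ Q(m)`, we have `g(L(m)) = Q(m)ᵀ g(L₀) Q(m)`, and
    ∀ m : ℕ, NormedSpace.exp ((Q m)ᵀ * gL₀ * Q m) = M m := by
  intro m
  obtain ⟨P, S, hP, hS, hpow, hconj⟩ := qr_algorithm_accumulated hfac hQm hRm hstep m
  have hm : (0 : ℝ) ≤ m := m.cast_nonneg
  have hQP : Q m = P := by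
    refine eq_of_mul_eq_mul_of_mem_upperTriangularPosDiag ?_ (hQ _ hm) hP (hR _ hm) hS
    rw [← hQR _ hm, Nat.cast_smul_eq_nsmul, exp_nsmul, ← hM0, hpow]
  rw [hQP, exp_transpose_mul_mul hP, ← hM0, hconj]

/-- At integer times, the QR flow interpolates the unshifted QR algorithm:
`e^{g(L(m))} = M_m` where `M₀ = e^{g(L₀)}` and `M_{m+1} = R_m Q_m`. -/
theorem qr_flow_interpolates_qr_algorithm {n : ℕ}
    (L₀ U : Matrix (Fin n) (Fin n) ℝ) (d : Fin n → ℝ) (g : ℝ → ℝ)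
    (hL₀ : L₀.IsSymm)
    (hU : U * Uᵀ = 1)
    (hspec : L₀ = U * Matrix.diagonal d * Uᵀ)
    (gL₀ : Matrix (Fin n) (Fin n) ℝ)
    (hgL₀ : gL₀ = U * Matrix.diagonal (fun i => g (d i)) * Uᵀ)
    -- the QR factorization of the flow `e^{t g(L₀)}`
    (Q R : ℝ → Matrix (Fin n) (Fin n) ℝ)
    (hQR : ∀ t : ℝ, 0 ≤ t → NormedSpace.exp (t • gL₀) = Q t * R t)
    (hQ : ∀ t : ℝ, 0 ≤ t → Q t * (Q t)ᵀ = 1)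
    (hR : ∀ t : ℝ, 0 ≤ t → (R t).BlockTriangular id ∧ ∀ i, 0 < R t i i)
    (hQ0 : Q 0 = 1)
    -- the unshifted QR algorithm applied to `M₀ = e^{g(L₀)}`
    (M Qm Rm : ℕ → Matrix (Fin n) (Fin n) ℝ)
    (hM0 : M 0 = NormedSpace.exp gL₀)
    (hfac : ∀ m : ℕ, M m = Qm m * Rm m)
    (hQm : ∀ m : ℕ, Qm m * (Qm m)ᵀ = 1)
    (hRm : ∀ m : ℕ, (Rm m).BlockTriangular id ∧ ∀ i, 0 < Rm m i i)
    (hstep : ∀ m : ℕ, M (m + 1) = Rm m * Qm m) :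
    -- since `L(m) = Q(m)ᵀ L₀ Q(m)`, we have `g(L(m)) = Q(m)ᵀ g(L₀) Q(m)`, and
    ∀ m : ℕ, NormedSpace.exp ((Q m)ᵀ * gL₀ * Q m) = M m :=
  qr_flow_interpolates_qr_algorithm_general gL₀ Q R hQR hQ hR M Qm Rm hM0 hfac hQm hRm hstep
end

section
/- With the setup of the $2\times 2$ Toda flow (off-diagonal entry $m_{12}(t) = (\lambda_1-\lambda_2) \frac{e^{t(\lambda_2-\lambda_1)}\tan\theta_0}{1+e^{2t(\lambda_2-\lambda_1)}\tan^2\theta_0}$, $\lambda_1 > \lambda_2$, $\theta_0 \in (0,\pi/2)$), suppose $0 < \epsilon < m_{12}(0)$ and $2\epsilon < \lambda_1 - \lambda_2$. Then the deflation time $\tau_\epsilon = \inf\{t > 0 : m_{12}(t) < \epsilon\}$ satisfies $(\lambda_1-\lambda_2)\tau_\epsilon = \log\tan\theta_0 - \log\left[\frac{\lambda_1-\lambda_2}{2\epsilon} - \sqrt{\frac{(\lambda_1-\lambda_2)^2}{4\epsilon^2} - 1}\right]$. -/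
/-!
Write `δ = λ₁ - λ₂` and `u = e^{-δt} tan θ₀`, so that `m₁₂ = δu / (1 + u²)`. With `c = δ/(2ε) > 1`,
the inequality `m₁₂ < ε` reads `(r - u)(R - u) > 0`, where `r = c - √(c² - 1) < R = c + √(c² - 1)`
are the roots of `x² - 2cx + 1`. The hypothesis `m₁₂(0) > ε` places `tan θ₀` strictly between the
roots; since `u` decreases from `tan θ₀`, it stays below `R` for `t > 0`, so `m₁₂(t) < ε` exactly
when `u < r`, i.e. when `δt > log tan θ₀ - log r`. The set of such `t > 0` is therefore an open
half-line, and its infimum is that threshold.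
-/

open Real Set

namespace Toda2x2

noncomputable def smallRoot (c : ℝ) : ℝ := c - √(c ^ 2 - 1)

noncomputable def largeRoot (c : ℝ) : ℝ := c + √(c ^ 2 - 1)

lemma smallRoot_pos {c : ℝ} (hc : 0 < c) : 0 < smallRoot c :=
  sub_pos.2 ((sqrt_lt' hc).2 (by linarith))

lemma smallRoot_le_largeRoot (c : ℝ) : smallRoot c ≤ largeRoot c := by
  have := sqrt_nonneg (c ^ 2 - 1)
  unfold smallRoot largeRoot
  linarith

lemma smallRoot_div_eq (δ ε : ℝ) :
    smallRoot (δ / (2 * ε)) = δ / (2 * ε) - √(δ ^ 2 / (4 * ε ^ 2) - 1) := by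
  rw [smallRoot, div_pow, mul_pow]
  norm_num

lemma smallRoot_sub_mul_largeRoot_sub {c : ℝ} (hc : 1 ≤ c ^ 2) (u : ℝ) :
    (smallRoot c - u) * (largeRoot c - u) = u ^ 2 - 2 * c * u + 1 := by
  unfold smallRoot largeRoot
  linear_combination (-1 : ℝ) * sq_sqrt (sub_nonneg.2 hc)

lemma one_add_sq_mul_sub_eq {δ ε : ℝ} (hε : ε ≠ 0) (hc : 1 ≤ (δ / (2 * ε)) ^ 2) (u : ℝ) :
    ε * (1 + u ^ 2) - δ * u =
      ε * ((smallRoot (δ / (2 * ε)) - u) * (largeRoot (δ / (2 * ε)) - u)) := by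
  rw [smallRoot_sub_mul_largeRoot_sub hc]
  field_simp
  ring

lemma mul_div_one_add_sq_lt_iff {δ ε : ℝ} (hε : 0 < ε) (hc : 1 ≤ (δ / (2 * ε)) ^ 2) (u : ℝ) :
    δ * u / (1 + u ^ 2) < ε ↔
      0 < (smallRoot (δ / (2 * ε)) - u) * (largeRoot (δ / (2 * ε)) - u) := by
  rw [div_lt_iff₀ (by positivity), ← sub_pos, one_add_sq_mul_sub_eq hε.ne' hc,
    mul_pos_iff_of_pos_left hε]

lemma mem_Ioo_of_lt_mul_div_one_add_sq {δ ε u : ℝ} (hε : 0 < ε) (hc : 1 ≤ (δ / (2 * ε)) ^ 2)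
    (h : ε < δ * u / (1 + u ^ 2)) :
    u ∈ Ioo (smallRoot (δ / (2 * ε))) (largeRoot (δ / (2 * ε))) := by
  rw [lt_div_iff₀ (by positivity), ← sub_neg, one_add_sq_mul_sub_eq hε.ne' hc] at h
  have hle := smallRoot_le_largeRoot (δ / (2 * ε))
  rcases mul_neg_iff.1 (neg_of_mul_neg_right h hε.le) with ⟨h₁, h₂⟩ | ⟨h₁, h₂⟩
  · exact absurd (h₂.trans h₁) (by linarith)
  · constructor <;> linarith

lemma exp_mul_neg_mul_lt_iff {δ T r t : ℝ} (hδ : 0 < δ) (hT : 0 < T) (hr : 0 < r) :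
    exp (t * -δ) * T < r ↔ (log T - log r) / δ < t := by
  rw [← lt_div_iff₀ hT, ← lt_log_iff_exp_lt (div_pos hr hT), log_div hr.ne' hT.ne',
    div_lt_iff₀ hδ]
  constructor <;> intro h <;> linarith

lemma exp_mul_neg_mul_lt_self {δ T t : ℝ} (hδ : 0 < δ) (hT : 0 < T) (ht : 0 < t) :
    exp (t * -δ) * T < T :=
  mul_lt_of_lt_one_left hT (exp_lt_one_iff.2 (by nlinarith))

noncomputable def todaOffDiag (δ T t : ℝ) : ℝ :=
  δ * (exp (t * -δ) * T) / (1 + (exp (t * -δ) * T) ^ 2)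

theorem setOf_todaOffDiag_lt_eq_Ioi {δ ε T : ℝ} (hδ : 0 < δ) (hT : 0 < T) (hε : 0 < ε)
    (hεδ : 2 * ε < δ) (h₀ : ε < todaOffDiag δ T 0) :
    {t : ℝ | 0 < t ∧ todaOffDiag δ T t < ε} =
      Ioi ((log T - log (smallRoot (δ / (2 * ε)))) / δ) := by
  rw [todaOffDiag, zero_mul, exp_zero, one_mul] at h₀
  set c := δ / (2 * ε)
  have hc₁ : 1 < c := by rw [lt_div_iff₀ (by positivity)]; linarith
  have hc : 1 ≤ c ^ 2 := by nlinarith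
  have hr := smallRoot_pos (zero_lt_one.trans hc₁)
  obtain ⟨hrT, hTR⟩ := mem_Ioo_of_lt_mul_div_one_add_sq hε hc h₀
  have hτ : 0 < (log T - log (smallRoot c)) / δ :=
    div_pos (sub_pos.2 (log_lt_log hr hrT)) hδ
  have hlt_iff : ∀ t, 0 < t →
      (0 < (smallRoot c - exp (t * -δ) * T) * (largeRoot c - exp (t * -δ) * T) ↔
        (log T - log (smallRoot c)) / δ < t) := fun t ht => by
    have hR : 0 < largeRoot c - exp (t * -δ) * T :=
      sub_pos.2 ((exp_mul_neg_mul_lt_self hδ hT ht).trans hTR)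
    rw [mul_pos_iff_of_pos_right hR, sub_pos, exp_mul_neg_mul_lt_iff hδ hT hr]
  ext t
  simp only [mem_ofPred_eq, mem_Ioi, todaOffDiag, mul_div_one_add_sq_lt_iff hε hc]
  exact ⟨fun ⟨ht, h⟩ => (hlt_iff t ht).1 h, fun h => ⟨hτ.trans h, (hlt_iff t (hτ.trans h)).2 h⟩⟩

end Toda2x2

open Toda2x2

/-- Deflation time formula for the 2×2 Toda flow. -/
theorem toda_2x2_deflation_time_formula
    (lam₁ lam₂ θ₀ ε : ℝ) (hlam : lam₂ < lam₁)
    (hθ₀ : θ₀ ∈ Set.Ioo 0 (π / 2))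
    (m₁₂ : ℝ → ℝ)
    (hm : ∀ t : ℝ, m₁₂ t =
      (lam₁ - lam₂) * (Real.exp (t * (lam₂ - lam₁)) * Real.tan θ₀) /
        (1 + Real.exp (2 * t * (lam₂ - lam₁)) * Real.tan θ₀ ^ 2))
    (hε : 0 < ε) (hε₁ : ε < m₁₂ 0) (hε₂ : 2 * ε < lam₁ - lam₂) :
    (lam₁ - lam₂) * sInf {t : ℝ | 0 < t ∧ m₁₂ t < ε} =
      Real.log (Real.tan θ₀) -
        Real.log ((lam₁ - lam₂) / (2 * ε) -
          Real.sqrt ((lam₁ - lam₂) ^ 2 / (4 * ε ^ 2) - 1)) := by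
  have hδ : 0 < lam₁ - lam₂ := sub_pos.2 hlam
  have hT : 0 < tan θ₀ := tan_pos_of_pos_of_lt_pi_div_two hθ₀.1 hθ₀.2
  have hm' : m₁₂ = todaOffDiag (lam₁ - lam₂) (tan θ₀) := funext fun t => by
    rw [hm t, todaOffDiag, mul_pow, ← exp_nat_mul, neg_sub]
    push_cast
    ring_nf
  subst hm'
  rw [setOf_todaOffDiag_lt_eq_Ioi hδ hT hε hε₂ hε₁, csInf_Ioi, mul_div_cancel₀ _ hδ.ne',
    smallRoot_div_eq]
end

section
/- With $\lambda_1 > \lambda_2$ and $\theta_0 \in (0,\pi/2)$ fixed, the $2\times 2$ Toda deflation time satisfies the asymptotic formula $(\lambda_1-\lambda_2)\tau_\epsilon + \log\epsilon \to \log\tan\theta_0 + \log(\lambda_1-\lambda_2)$ as $\epsilon \to 0^+$. -/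
open Real Filter Topology

/-! For `0 < ε ≤ d / 2` the quantity `d / (2ε) - √(d² / (4ε²) - 1)` is the small root of
`x² - (d / ε) x + 1`; rationalising it gives `ε / (d / 2 + √(d² / 4 - ε²))`, whose logarithm is
`log ε - log d + o(1)` as `ε → 0⁺`. -/

lemma half_div_sub_sqrt_eq_div_half_add_sqrt {d ε : ℝ} (hd : 0 < d) (hε : 0 < ε)
    (hεd : ε ≤ d / 2) :
    d / (2 * ε) - √(d ^ 2 / (4 * ε ^ 2) - 1) = ε / (d / 2 + √(d ^ 2 / 4 - ε ^ 2)) := by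
  have hnonneg : 0 ≤ d ^ 2 / 4 - ε ^ 2 := by nlinarith
  have hsq : √(d ^ 2 / 4 - ε ^ 2) ^ 2 = d ^ 2 / 4 - ε ^ 2 := sq_sqrt hnonneg
  have hpos : 0 < d / 2 + √(d ^ 2 / 4 - ε ^ 2) := by positivity
  have hscale : d ^ 2 / (4 * ε ^ 2) - 1 = (d ^ 2 / 4 - ε ^ 2) / ε ^ 2 := by field_simp
  rw [hscale, sqrt_div hnonneg, sqrt_sq hε.le]
  generalize √(d ^ 2 / 4 - ε ^ 2) = s at hsq hpos ⊢
  rw [eq_div_iff hpos.ne']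
  field_simp
  linear_combination (-4) * hsq

lemma tendsto_log_half_add_sqrt_sub_sq {d : ℝ} (hd : 0 < d) :
    Tendsto (fun ε : ℝ => log (d / 2 + √(d ^ 2 / 4 - ε ^ 2))) (𝓝 0) (𝓝 (log d)) := by
  have hzero : d / 2 + √(d ^ 2 / 4 - (0 : ℝ) ^ 2) = d := by
    rw [show d ^ 2 / 4 - (0 : ℝ) ^ 2 = (d / 2) ^ 2 by ring, sqrt_sq (by positivity)]
    ring
  have hcont : ContinuousAt (fun ε : ℝ => log (d / 2 + √(d ^ 2 / 4 - ε ^ 2))) 0 :=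
    (continuousAt_log (by rw [hzero]; exact hd.ne')).comp (by fun_prop)
  simpa only [Function.comp_def, hzero] using hcont.tendsto

lemma tendsto_log_sub_log_half_div_sub_sqrt {d : ℝ} (hd : 0 < d) :
    Tendsto (fun ε : ℝ => log ε - log (d / (2 * ε) - √(d ^ 2 / (4 * ε ^ 2) - 1)))
      (𝓝[>] 0) (𝓝 (log d)) := by
  refine (tendsto_log_half_add_sqrt_sub_sq hd).mono_left nhdsWithin_le_nhds |>.congr' ?_
  filter_upwards [Ioo_mem_nhdsGT (half_pos hd)] with ε ⟨hε, hεd⟩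
  have hpos : 0 < d / 2 + √(d ^ 2 / 4 - ε ^ 2) := by positivity
  rw [half_div_sub_sqrt_eq_div_half_add_sqrt hd hε hεd.le, log_div hε.ne' hpos.ne']
  ring

theorem toda_2x2_deflation_time_asymptotics_general
    (lam₁ lam₂ θ₀ : ℝ) (hlam : lam₂ < lam₁)
    (τ : ℝ → ℝ)
    (hτ : ∃ ε₁ > 0, ∀ ε ∈ Set.Ioo (0 : ℝ) ε₁,
      (lam₁ - lam₂) * τ ε =
        Real.log (Real.tan θ₀) -
          Real.log ((lam₁ - lam₂) / (2 * ε) -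
            Real.sqrt ((lam₁ - lam₂) ^ 2 / (4 * ε ^ 2) - 1))) :
    Tendsto (fun ε : ℝ => (lam₁ - lam₂) * τ ε + Real.log ε)
      (nhdsWithin 0 (Set.Ioi 0))
      (nhds (Real.log (Real.tan θ₀) + Real.log (lam₁ - lam₂))) := by
  obtain ⟨ε₁, hε₁, hτ⟩ := hτ
  refine (tendsto_const_nhds.add
    (tendsto_log_sub_log_half_div_sub_sqrt (sub_pos.mpr hlam))).congr' ?_
  filter_upwards [Ioo_mem_nhdsGT hε₁] with ε hε
  rw [hτ ε hε]
  ring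

/-- Asymptotics of the 2×2 Toda deflation time:
`(λ₁-λ₂)τ_ε + log ε → log tan θ₀ + log(λ₁-λ₂)` as `ε → 0⁺`. -/
theorem toda_2x2_deflation_time_asymptotics
    (lam₁ lam₂ θ₀ : ℝ) (hlam : lam₂ < lam₁)
    (hθ₀ : θ₀ ∈ Set.Ioo 0 (π / 2))
    (τ : ℝ → ℝ)
    (hτ : ∃ ε₁ > 0, ∀ ε ∈ Set.Ioo (0 : ℝ) ε₁,
      (lam₁ - lam₂) * τ ε =
        Real.log (Real.tan θ₀) -
          Real.log ((lam₁ - lam₂) / (2 * ε) -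
            Real.sqrt ((lam₁ - lam₂) ^ 2 / (4 * ε ^ 2) - 1))) :
    Tendsto (fun ε : ℝ => (lam₁ - lam₂) * τ ε + Real.log ε)
      (nhdsWithin 0 (Set.Ioi 0))
      (nhds (Real.log (Real.tan θ₀) + Real.log (lam₁ - lam₂))) :=
  toda_2x2_deflation_time_asymptotics_general lam₁ lam₂ θ₀ hlam τ hτ
end

section
/- The map $(\lambda_1,\lambda_2,\theta) \mapsto M$, where $M = U\Lambda U^T$ with $\Lambda = \mathrm{diag}(\lambda_1,\lambda_2)$ and $U = \begin{pmatrix}\cos\theta & \sin\theta \\ \sin\theta & -\cos\theta\end{pmatrix}$, restricted to $\{\lambda_1 > \lambda_2\} \times (0,\pi/2)$, is a diffeomorphism onto the set of $2\times 2$ real symmetric matrices with positive off-diagonal entry, and its Jacobian determinant (with respect to coordinates $(m_{11}, m_{22}, m_{12})$) equals $\lambda_1 - \lambda_2$ in absolute value. -/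
open Real Set ContinuousLinearMap

noncomputable def eTriple : (ℝ × ℝ × ℝ) ≃ₗ[ℝ] (Fin 3 → ℝ) where
  toFun p := ![p.1, p.2.1, p.2.2]
  invFun f := (f 0, f 1, f 2)
  map_add' p q := by funext i; fin_cases i <;> simp
  map_smul' c p := by funext i; fin_cases i <;> simp
  left_inv p := by simp
  right_inv f := by funext i; fin_cases i <;> simp

noncomputable def bTriple : Module.Basis (Fin 3) ℝ (ℝ × ℝ × ℝ) := Module.Basis.ofEquivFun eTriple

noncomputable def L3 (a b c : ℝ) : (ℝ × ℝ × ℝ) →L[ℝ] ℝ :=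
  a • fst ℝ ℝ (ℝ × ℝ) + b • (fst ℝ ℝ ℝ).comp (snd ℝ ℝ (ℝ × ℝ))
    + c • (snd ℝ ℝ ℝ).comp (snd ℝ ℝ (ℝ × ℝ))

lemma L3_apply (a b c : ℝ) (v : ℝ × ℝ × ℝ) : L3 a b c v = a * v.1 + b * v.2.1 + c * v.2.2 := by
  simp [L3, smul_eq_mul]

noncomputable def Dmap (l1 l2 t : ℝ) : (ℝ × ℝ × ℝ) →L[ℝ] (ℝ × ℝ × ℝ) :=
  (L3 (cos t ^ 2) (sin t ^ 2) (-(2 * (l1 - l2) * cos t * sin t))).prod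
    ((L3 (sin t ^ 2) (cos t ^ 2) (2 * (l1 - l2) * cos t * sin t)).prod
      (L3 (cos t * sin t) (-(cos t * sin t)) ((l1 - l2) * (cos t ^ 2 - sin t ^ 2))))

lemma det_Dmap (l1 l2 t : ℝ) :
    LinearMap.det (Dmap l1 l2 t : (ℝ × ℝ × ℝ) →ₗ[ℝ] (ℝ × ℝ × ℝ)) = l1 - l2 := by
  rw [← LinearMap.det_toMatrix bTriple]
  have hM : (LinearMap.toMatrix bTriple bTriple (Dmap l1 l2 t)) =
      !![cos t ^ 2, sin t ^ 2, -(2 * (l1 - l2) * cos t * sin t);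
         sin t ^ 2, cos t ^ 2, 2 * (l1 - l2) * cos t * sin t;
         cos t * sin t, -(cos t * sin t), (l1 - l2) * (cos t ^ 2 - sin t ^ 2)] := by
    ext i j
    fin_cases i <;> fin_cases j <;>
      simp [LinearMap.toMatrix_apply, bTriple, eTriple, Dmap, L3_apply, Pi.single,
        Function.update]
  rw [hM, Matrix.det_fin_three]
  simp
  linear_combination ((l1 - l2) * ((sin t ^ 2 + cos t ^ 2) ^ 2 + (sin t ^ 2 + cos t ^ 2) + 1)) *
    sin_sq_add_cos_sq t

lemma hasFDerivAt_Fmap (p : ℝ × ℝ × ℝ) :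
    HasFDerivAt (fun p : ℝ × ℝ × ℝ =>
      ((p.1 * Real.cos p.2.2 ^ 2 + p.2.1 * Real.sin p.2.2 ^ 2,
        p.1 * Real.sin p.2.2 ^ 2 + p.2.1 * Real.cos p.2.2 ^ 2,
        (p.1 - p.2.1) * Real.cos p.2.2 * Real.sin p.2.2) : ℝ × ℝ × ℝ))
      (Dmap p.1 p.2.1 p.2.2) p := by
  have hl1 : HasFDerivAt (fun q : ℝ × ℝ × ℝ => q.1) (fst ℝ ℝ (ℝ × ℝ)) p := hasFDerivAt_fst
  have hl2 : HasFDerivAt (fun q : ℝ × ℝ × ℝ => q.2.1)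
      ((fst ℝ ℝ ℝ).comp (snd ℝ ℝ (ℝ × ℝ))) p := hasFDerivAt_fst.comp p hasFDerivAt_snd
  have hθ : HasFDerivAt (fun q : ℝ × ℝ × ℝ => q.2.2)
      ((snd ℝ ℝ ℝ).comp (snd ℝ ℝ (ℝ × ℝ))) p := hasFDerivAt_snd.comp p hasFDerivAt_snd
  have hc : HasFDerivAt (fun q : ℝ × ℝ × ℝ => Real.cos q.2.2) _ p :=
    HasDerivAt.comp_hasFDerivAt (h₂ := Real.cos) p (Real.hasDerivAt_cos p.2.2) hθ
  have hs : HasFDerivAt (fun q : ℝ × ℝ × ℝ => Real.sin q.2.2) _ p :=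
    HasDerivAt.comp_hasFDerivAt (h₂ := Real.sin) p (Real.hasDerivAt_sin p.2.2) hθ
  simp only [pow_two]
  have hc2 := hc.mul hc
  have hs2 := hs.mul hs
  have h1 := (hl1.mul hc2).add (hl2.mul hs2)
  have h2 := (hl1.mul hs2).add (hl2.mul hc2)
  have h3 := ((hl1.sub hl2).mul hc).mul hs
  have h := h1.prodMk (h2.prodMk h3)
  refine h.congr_fderiv ?_
  refine ContinuousLinearMap.ext fun v => ?_
  simp [Dmap, L3_apply, Prod.ext_iff, smul_eq_mul]
  refine ⟨by ring, by ring, by ring⟩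

noncomputable def Ginv (q : ℝ × ℝ × ℝ) : ℝ × ℝ × ℝ :=
  ((q.1 + q.2.1 + Real.sqrt ((q.1 - q.2.1) ^ 2 + 4 * q.2.2 ^ 2)) / 2,
   (q.1 + q.2.1 - Real.sqrt ((q.1 - q.2.1) ^ 2 + 4 * q.2.2 ^ 2)) / 2,
   Real.arccos ((q.1 - q.2.1) / Real.sqrt ((q.1 - q.2.1) ^ 2 + 4 * q.2.2 ^ 2)) / 2)

lemma rpos (q : ℝ × ℝ × ℝ) (hq : 0 < q.2.2) :
    0 < Real.sqrt ((q.1 - q.2.1) ^ 2 + 4 * q.2.2 ^ 2) :=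
  Real.sqrt_pos.2 (by nlinarith)

lemma rsq (q : ℝ × ℝ × ℝ) (hq : 0 < q.2.2) :
    Real.sqrt ((q.1 - q.2.1) ^ 2 + 4 * q.2.2 ^ 2) ^ 2 = (q.1 - q.2.1) ^ 2 + 4 * q.2.2 ^ 2 :=
  Real.sq_sqrt (by nlinarith)

lemma xlt (q : ℝ × ℝ × ℝ) (hq : 0 < q.2.2) :
    |(q.1 - q.2.1) / Real.sqrt ((q.1 - q.2.1) ^ 2 + 4 * q.2.2 ^ 2)| < 1 := by
  have hr := rpos q hq
  have hr2 := rsq q hq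
  rw [abs_div, abs_of_pos hr, div_lt_one hr]
  nlinarith [abs_nonneg (q.1 - q.2.1), sq_abs (q.1 - q.2.1)]

lemma Ginv_mem (q : ℝ × ℝ × ℝ) (hq : 0 < q.2.2) :
    (Ginv q).2.1 < (Ginv q).1 ∧ (Ginv q).2.2 ∈ Ioo 0 (π / 2) := by
  have hr := rpos q hq
  have hx := xlt q hq
  rw [abs_lt] at hx
  refine ⟨by simp only [Ginv]; linarith, ?_, ?_⟩
  · simp only [Ginv]
    have := Real.arccos_pos.2 hx.2
    linarith
  · simp only [Ginv]
    have h1 : Real.arcsin ((q.1 - q.2.1) / Real.sqrt ((q.1 - q.2.1) ^ 2 + 4 * q.2.2 ^ 2)) > -(π/2) :=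
      Real.neg_pi_div_two_lt_arcsin.2 hx.1
    have h2 : Real.arccos ((q.1 - q.2.1) / Real.sqrt ((q.1 - q.2.1) ^ 2 + 4 * q.2.2 ^ 2)) =
        π/2 - Real.arcsin ((q.1 - q.2.1) / Real.sqrt ((q.1 - q.2.1) ^ 2 + 4 * q.2.2 ^ 2)) := by
      simp [Real.arccos]
    linarith

lemma F_Ginv (q : ℝ × ℝ × ℝ) (hq : 0 < q.2.2) :
    ((Ginv q).1 * Real.cos (Ginv q).2.2 ^ 2 + (Ginv q).2.1 * Real.sin (Ginv q).2.2 ^ 2,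
     (Ginv q).1 * Real.sin (Ginv q).2.2 ^ 2 + (Ginv q).2.1 * Real.cos (Ginv q).2.2 ^ 2,
     ((Ginv q).1 - (Ginv q).2.1) * Real.cos (Ginv q).2.2 * Real.sin (Ginv q).2.2) = q := by
  have hr := rpos q hq
  have hr2 := rsq q hq
  set r := Real.sqrt ((q.1 - q.2.1) ^ 2 + 4 * q.2.2 ^ 2) with hrdef
  set x := (q.1 - q.2.1) / r with hxdef
  have hx : |x| < 1 := xlt q hq
  rw [abs_lt] at hx
  have hxr : x * r = q.1 - q.2.1 := by rw [hxdef]; field_simp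
  have hcos2 : Real.cos ((Ginv q).2.2) ^ 2 = (1 + x) / 2 := by
    simp only [Ginv]
    have h := Real.cos_sq (Real.arccos ((q.1 - q.2.1) / Real.sqrt ((q.1 - q.2.1) ^ 2 + 4 * q.2.2 ^ 2)) / 2)
    rw [show 2 * (Real.arccos ((q.1 - q.2.1) / Real.sqrt ((q.1 - q.2.1) ^ 2 + 4 * q.2.2 ^ 2)) / 2)
        = Real.arccos ((q.1 - q.2.1) / Real.sqrt ((q.1 - q.2.1) ^ 2 + 4 * q.2.2 ^ 2)) by ring,
      Real.cos_arccos (by linarith) (by linarith)] at h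
    rw [h]; ring
  have hsin2 : Real.sin ((Ginv q).2.2) ^ 2 = (1 - x) / 2 := by
    have h := Real.sin_sq_add_cos_sq ((Ginv q).2.2)
    rw [hcos2] at h
    linarith
  have hcs : Real.cos ((Ginv q).2.2) * Real.sin ((Ginv q).2.2) = q.2.2 / r := by
    have h2 : Real.sin (2 * ((Ginv q).2.2)) =
        2 * Real.sin ((Ginv q).2.2) * Real.cos ((Ginv q).2.2) := Real.sin_two_mul _
    have harg : 2 * ((Ginv q).2.2) = Real.arccos x := by
      simp only [Ginv]; ring
    rw [harg] at h2
    rw [Real.sin_arccos] at h2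
    have h1x : Real.sqrt (1 - x ^ 2) = 2 * q.2.2 / r := by
      have : 1 - x ^ 2 = (2 * q.2.2 / r) ^ 2 := by
        rw [hxdef]
        field_simp
        nlinarith
      rw [this, Real.sqrt_sq (by positivity)]
    rw [h1x] at h2
    have h3 : 2 * q.2.2 / r = 2 * (q.2.2 / r) := by ring
    linarith [h2, h3, mul_comm (Real.sin ((Ginv q).2.2)) (Real.cos ((Ginv q).2.2))]
  have hd : (Ginv q).1 - (Ginv q).2.1 = r := by simp only [Ginv]; ring
  have hsum : (Ginv q).1 + (Ginv q).2.1 = q.1 + q.2.1 := by simp only [Ginv]; ring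
  refine Prod.ext ?_ (Prod.ext ?_ ?_)
  · show (Ginv q).1 * _ + (Ginv q).2.1 * _ = q.1
    rw [hcos2, hsin2]; nlinarith
  · show (Ginv q).1 * _ + (Ginv q).2.1 * _ = q.2.1
    rw [hsin2, hcos2]; nlinarith
  · show ((Ginv q).1 - (Ginv q).2.1) * _ * _ = q.2.2
    rw [mul_assoc, hcs, hd]; field_simp

lemma contDiffOn_Ginv : ContDiffOn ℝ (⊤ : ℕ∞) Ginv {q : ℝ × ℝ × ℝ | 0 < q.2.2} := by
  intro q hq
  have hq' : (0 : ℝ) < q.2.2 := hq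
  refine ContDiffAt.contDiffWithinAt ?_
  have hu : ContDiffAt ℝ (⊤ : ℕ∞) (fun q : ℝ × ℝ × ℝ => (q.1 - q.2.1) ^ 2 + 4 * q.2.2 ^ 2) q :=
    (((contDiff_fst.sub (contDiff_fst.comp contDiff_snd)).pow 2).add
      ((contDiff_const.mul (((contDiff_snd.comp contDiff_snd)).pow 2)))).contDiffAt
  have hupos : (0 : ℝ) < (q.1 - q.2.1) ^ 2 + 4 * q.2.2 ^ 2 := by nlinarith
  have hrr : ContDiffAt ℝ (⊤ : ℕ∞) (fun q : ℝ × ℝ × ℝ =>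
      Real.sqrt ((q.1 - q.2.1) ^ 2 + 4 * q.2.2 ^ 2)) q :=
    (Real.contDiffAt_sqrt hupos.ne').comp q hu
  have hrne : Real.sqrt ((q.1 - q.2.1) ^ 2 + 4 * q.2.2 ^ 2) ≠ 0 := (rpos q hq').ne'
  have hsum : ContDiffAt ℝ (⊤ : ℕ∞) (fun q : ℝ × ℝ × ℝ => q.1 + q.2.1) q :=
    (contDiff_fst.add (contDiff_fst.comp contDiff_snd)).contDiffAt
  have hnum : ContDiffAt ℝ (⊤ : ℕ∞) (fun q : ℝ × ℝ × ℝ => q.1 - q.2.1) q :=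
    (contDiff_fst.sub (contDiff_fst.comp contDiff_snd)).contDiffAt
  have hxq : ContDiffAt ℝ (⊤ : ℕ∞) (fun q : ℝ × ℝ × ℝ =>
      (q.1 - q.2.1) / Real.sqrt ((q.1 - q.2.1) ^ 2 + 4 * q.2.2 ^ 2)) q :=
    hnum.div hrr hrne
  have hx := xlt q hq'
  rw [abs_lt] at hx
  have harccos : ContDiffAt ℝ (⊤ : ℕ∞) (fun q : ℝ × ℝ × ℝ =>
      Real.arccos ((q.1 - q.2.1) / Real.sqrt ((q.1 - q.2.1) ^ 2 + 4 * q.2.2 ^ 2))) q :=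
    (Real.contDiffAt_arccos (by linarith) (by linarith)).comp q hxq
  exact (((hsum.add hrr).div_const 2).prodMk
    (((hsum.sub hrr).div_const 2).prodMk (harccos.div_const 2)))


open Real Set

/-- The spectral map `(λ₁,λ₂,θ) ↦ (m₁₁, m₂₂, m₁₂)` for 2×2 symmetric matrices is
a diffeomorphism from `{λ₁ > λ₂} × (0, π/2)` onto the matrices with positive
off-diagonal entry, with Jacobian determinant `λ₁ - λ₂` in absolute value. -/
theorem spectral_map_2x2_diffeomorphism
    (F : ℝ × ℝ × ℝ → ℝ × ℝ × ℝ)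
    (hF : ∀ p : ℝ × ℝ × ℝ, F p =
      (p.1 * Real.cos p.2.2 ^ 2 + p.2.1 * Real.sin p.2.2 ^ 2,
       p.1 * Real.sin p.2.2 ^ 2 + p.2.1 * Real.cos p.2.2 ^ 2,
       (p.1 - p.2.1) * Real.cos p.2.2 * Real.sin p.2.2))
    (S T : Set (ℝ × ℝ × ℝ))
    (hS : S = {p : ℝ × ℝ × ℝ | p.2.1 < p.1 ∧ p.2.2 ∈ Ioo 0 (π / 2)})
    (hT : T = {q : ℝ × ℝ × ℝ | 0 < q.2.2}) :
    Set.BijOn F S T ∧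
    ContDiffOn ℝ (⊤ : ℕ∞) F S ∧
    ContDiffOn ℝ (⊤ : ℕ∞) (Function.invFunOn F S) T ∧
    ∀ p ∈ S, ∃ D : ℝ × ℝ × ℝ →L[ℝ] ℝ × ℝ × ℝ,
      HasFDerivAt F D p ∧
        |LinearMap.det (D : ℝ × ℝ × ℝ →ₗ[ℝ] ℝ × ℝ × ℝ)| = p.1 - p.2.1 := by
  have hFeq : F = fun p : ℝ × ℝ × ℝ =>
      ((p.1 * Real.cos p.2.2 ^ 2 + p.2.1 * Real.sin p.2.2 ^ 2,
        p.1 * Real.sin p.2.2 ^ 2 + p.2.1 * Real.cos p.2.2 ^ 2,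
        (p.1 - p.2.1) * Real.cos p.2.2 * Real.sin p.2.2) : ℝ × ℝ × ℝ) := funext hF
  -- MapsTo
  have hmaps : Set.MapsTo F S T := by
    intro p hp
    rw [hS] at hp
    obtain ⟨hd, ht1, ht2⟩ := hp
    have hcpos : 0 < Real.cos p.2.2 :=
      Real.cos_pos_of_mem_Ioo ⟨by linarith [Real.pi_pos], ht2⟩
    have hspos : 0 < Real.sin p.2.2 :=
      Real.sin_pos_of_pos_of_lt_pi ht1 (by linarith [Real.pi_pos])
    rw [hT]
    show 0 < (F p).2.2
    rw [hF p]
    have : 0 < p.1 - p.2.1 := by linarith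
    positivity
  -- InjOn
  have hinj : Set.InjOn F S := by
    intro p hp p' hp' he
    rw [hS] at hp hp'
    obtain ⟨hd, ht1, ht2⟩ := hp
    obtain ⟨hd', ht1', ht2'⟩ := hp'
    rw [hF p, hF p'] at he
    simp only [Prod.mk.injEq] at he
    obtain ⟨e1, e2, e3⟩ := he
    have hpy := Real.sin_sq_add_cos_sq p.2.2
    have hpy' := Real.sin_sq_add_cos_sq p'.2.2
    have hdp : 0 < p.1 - p.2.1 := by linarith
    have hdp' : 0 < p'.1 - p'.2.1 := by linarith
    have hsum : p.1 + p.2.1 = p'.1 + p'.2.1 := by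
      linear_combination e1 + e2 - (p.1 + p.2.1) * hpy + (p'.1 + p'.2.1) * hpy'
    have hdsq : (p.1 - p.2.1) ^ 2 = (p'.1 - p'.2.1) ^ 2 := by
      have k1 : (p.1 - p.2.1) ^ 2 =
          (p.1 * Real.cos p.2.2 ^ 2 + p.2.1 * Real.sin p.2.2 ^ 2
            - (p.1 * Real.sin p.2.2 ^ 2 + p.2.1 * Real.cos p.2.2 ^ 2)) ^ 2
          + 4 * ((p.1 - p.2.1) * Real.cos p.2.2 * Real.sin p.2.2) ^ 2 := by
        linear_combination (-(p.1 - p.2.1) ^ 2 *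
          (Real.sin p.2.2 ^ 2 + Real.cos p.2.2 ^ 2 + 1)) * hpy
      have k2 : (p'.1 - p'.2.1) ^ 2 =
          (p'.1 * Real.cos p'.2.2 ^ 2 + p'.2.1 * Real.sin p'.2.2 ^ 2
            - (p'.1 * Real.sin p'.2.2 ^ 2 + p'.2.1 * Real.cos p'.2.2 ^ 2)) ^ 2
          + 4 * ((p'.1 - p'.2.1) * Real.cos p'.2.2 * Real.sin p'.2.2) ^ 2 := by
        linear_combination (-(p'.1 - p'.2.1) ^ 2 *
          (Real.sin p'.2.2 ^ 2 + Real.cos p'.2.2 ^ 2 + 1)) * hpy'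
      rw [k1, k2, e1, e2, e3]
    have hdd : p.1 - p.2.1 = p'.1 - p'.2.1 := by nlinarith
    have hl1 : p.1 = p'.1 := by linarith
    have hl2 : p.2.1 = p'.2.1 := by linarith
    have hcc : Real.cos (2 * p.2.2) = Real.cos (2 * p'.2.2) := by
      rw [Real.cos_two_mul', Real.cos_two_mul']
      have : (p.1 - p.2.1) * (Real.cos p.2.2 ^ 2 - Real.sin p.2.2 ^ 2)
          = (p'.1 - p'.2.1) * (Real.cos p'.2.2 ^ 2 - Real.sin p'.2.2 ^ 2) := by
        linear_combination e1 - e2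
      rw [← hdd] at this
      exact mul_left_cancel₀ hdp.ne' this
    have htt : 2 * p.2.2 = 2 * p'.2.2 := by
      apply Real.injOn_cos ⟨by linarith, by linarith⟩ ⟨by linarith, by linarith⟩ hcc
    have ht : p.2.2 = p'.2.2 := by linarith
    exact Prod.ext hl1 (Prod.ext hl2 ht)
  -- SurjOn
  have hsurj : Set.SurjOn F S T := by
    intro q hq
    rw [hT] at hq
    refine ⟨Ginv q, ?_, ?_⟩
    · rw [hS]; exact Ginv_mem q hq
    · rw [hF]; exact F_Ginv q hq
  have hbij : Set.BijOn F S T := ⟨hmaps, hinj, hsurj⟩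
  refine ⟨hbij, ?_, ?_, ?_⟩
  -- smoothness of F
  · rw [hFeq]
    refine ContDiff.contDiffOn ?_
    refine ContDiff.prodMk ?_ (ContDiff.prodMk ?_ ?_)
    · exact (contDiff_fst.mul ((Real.contDiff_cos.comp
        (contDiff_snd.comp contDiff_snd)).pow 2)).add
        ((contDiff_fst.comp contDiff_snd).mul ((Real.contDiff_sin.comp
          (contDiff_snd.comp contDiff_snd)).pow 2))
    · exact (contDiff_fst.mul ((Real.contDiff_sin.comp
        (contDiff_snd.comp contDiff_snd)).pow 2)).add
        ((contDiff_fst.comp contDiff_snd).mul ((Real.contDiff_cos.comp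
          (contDiff_snd.comp contDiff_snd)).pow 2))
    · exact ((contDiff_fst.sub (contDiff_fst.comp contDiff_snd)).mul
        (Real.contDiff_cos.comp (contDiff_snd.comp contDiff_snd))).mul
        (Real.contDiff_sin.comp (contDiff_snd.comp contDiff_snd))
  -- smoothness of the inverse
  · have hcongr : ∀ q ∈ T, Function.invFunOn F S q = Ginv q := by
      intro q hq
      have hq' : 0 < q.2.2 := by rw [hT] at hq; exact hq
      have hmem : Ginv q ∈ S := by rw [hS]; exact Ginv_mem q hq'
      have hfg : F (Ginv q) = q := by rw [hF]; exact F_Ginv q hq'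
      have hex : ∃ a ∈ S, F a = q := ⟨Ginv q, hmem, hfg⟩
      have h1 : Function.invFunOn F S q ∈ S := Function.invFunOn_mem hex
      have h2 : F (Function.invFunOn F S q) = q := Function.invFunOn_eq hex
      exact hinj h1 hmem (by rw [h2, hfg])
    refine ContDiffOn.congr ?_ hcongr
    rw [hT]
    exact contDiffOn_Ginv
  -- derivative
  · intro p hp
    rw [hS] at hp
    obtain ⟨hd, ht1, ht2⟩ := hp
    refine ⟨Dmap p.1 p.2.1 p.2.2, ?_, ?_⟩
    · rw [hFeq]; exact hasFDerivAt_Fmap p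
    · rw [det_Dmap]
      exact abs_of_pos (by linarith)
end

section
/- Fix $\lambda_1 > \lambda_2$ and consider the $2\times 2$ Toda flow with initial angle $\theta_0$ uniformly distributed (or more generally, the deflation time as a function of $(\lambda_1,\lambda_2,\theta_0)$). For GOE-distributed $2\times 2$ matrices, the expected deflation time satisfies $\mu_{2,\epsilon,\mathrm{GOE}} = O(|\log\epsilon|)$ as $\epsilon \to 0$: specifically, there exists $C > 0$ such that $\int_{-\infty}^{\infty}\int_{-\infty}^{\lambda_1}\int_0^{\pi/2} \tau_\epsilon(\lambda_1,\lambda_2,\theta)\, e^{-(\lambda_1^2+\lambda_2^2)/4}(\lambda_1-\lambda_2)\, d\theta\, d\lambda_2\, d\lambda_1 \leq C|\log\epsilon|$ for all sufficiently small $\epsilon > 0$. -/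
/-!
Write `Δ = λ₁ - λ₂`, `t = tan θ` and `s = Δ / (2ε)`. Since `cos θ sin θ = t / (1 + t²)`, the
condition `m₁₂(0) > ε` says `t² - 2st + 1 < 0`, i.e. `t` lies strictly between the roots
`r = s - √(s² - 1)` and `1 / r` of that quadratic. Hence `0 < Δ τ_ε = log t - log r ≤ -2 log r`,
and `1 / r = s + √(s² - 1) ≤ 2s = Δ / ε`, so `0 ≤ Δ τ_ε ≤ 2 log (Δ / ε) ≤ 2 |log ε| (1 + Δ)` once
`|log ε| ≥ 1`. The Gaussian factor makes `(1 + Δ) e^{-(λ₁² + λ₂²)/4}` integrable, and the bound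
follows with `C` twice the integral of that majorant (plus one).
-/

open Real Set MeasureTheory

lemma sub_sqrt_lt_and_lt_add_sqrt {s t : ℝ} (h : 1 + t ^ 2 < 2 * s * t) :
    s - √(s ^ 2 - 1) < t ∧ t < s + √(s ^ 2 - 1) := by
  have hdist : |t - s| < √(s ^ 2 - 1) := by
    rw [Real.lt_sqrt (abs_nonneg _), sq_abs]
    linarith
  constructor <;> linarith [(abs_lt.1 hdist).1, (abs_lt.1 hdist).2]

lemma sub_sqrt_mul_add_sqrt {s : ℝ} (hs : 1 ≤ s) :
    (s - √(s ^ 2 - 1)) * (s + √(s ^ 2 - 1)) = 1 := by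
  have hsq : √(s ^ 2 - 1) ^ 2 = s ^ 2 - 1 := Real.sq_sqrt (by nlinarith)
  linear_combination -hsq

lemma log_sub_log_sub_sqrt_mem_Ioc {s t : ℝ} (ht : 0 < t) (h : 1 + t ^ 2 < 2 * s * t) :
    0 < log t - log (s - √(s ^ 2 - 1)) ∧
      log t - log (s - √(s ^ 2 - 1)) ≤ 2 * log (2 * s) := by
  have hs : 1 ≤ s := by nlinarith [sq_nonneg (t - 1)]
  obtain ⟨hr_lt, hR_gt⟩ := sub_sqrt_lt_and_lt_add_sqrt h
  set R := s + √(s ^ 2 - 1)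
  have hR : 0 < R := by positivity
  have hr : s - √(s ^ 2 - 1) = R⁻¹ := eq_inv_of_mul_eq_one_left (sub_sqrt_mul_add_sqrt hs)
  have hR_le : R ≤ 2 * s := by
    have : √(s ^ 2 - 1) ≤ s := (Real.sqrt_le_left (by linarith)).2 (by linarith)
    linarith
  rw [hr] at hr_lt ⊢
  rw [Real.log_inv, sub_neg_eq_add]
  have hlog_t : log t < log R := Real.log_lt_log ht hR_gt
  have hlog_R : log R ≤ log (2 * s) := Real.log_le_log hR hR_le
  have hlog_r : -log R < log t := by
    rw [← Real.log_inv]; exact Real.log_lt_log (inv_pos.2 hR) hr_lt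
  constructor <;> linarith

lemma cos_mul_sin_eq_tan_div {θ : ℝ} (hθ : cos θ ≠ 0) :
    cos θ * sin θ = tan θ / (1 + tan θ ^ 2) := by
  rw [div_eq_mul_inv, Real.inv_one_add_tan_sq hθ, Real.tan_eq_sin_div_cos]
  field_simp

lemma log_tan_sub_log_root_mem_Ioc {ε Δ θ : ℝ} (hε : 0 < ε) (hθ : θ ∈ Ioo 0 (π / 2))
    (hm : ε < Δ * cos θ * sin θ) :
    0 < log (tan θ) - log (Δ / (2 * ε) - √(Δ ^ 2 / (4 * ε ^ 2) - 1)) ∧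
      log (tan θ) - log (Δ / (2 * ε) - √(Δ ^ 2 / (4 * ε ^ 2) - 1)) ≤ 2 * log (Δ / ε) := by
  have ht : 0 < tan θ := Real.tan_pos_of_pos_of_lt_pi_div_two hθ.1 hθ.2
  have hquad : 1 + tan θ ^ 2 < 2 * (Δ / (2 * ε)) * tan θ := by
    have hcos : cos θ ≠ 0 :=
      (Real.cos_pos_of_mem_Ioo ⟨by linarith [hθ.1, Real.pi_pos], hθ.2⟩).ne'
    rw [mul_assoc, cos_mul_sin_eq_tan_div hcos, mul_div_assoc', lt_div_iff₀ (by positivity)] at hm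
    rw [mul_div_assoc', mul_div_mul_left _ _ two_ne_zero, div_mul_eq_mul_div, lt_div_iff₀ hε]
    linarith
  have hs : (Δ / (2 * ε)) ^ 2 = Δ ^ 2 / (4 * ε ^ 2) := by ring
  have h2s : 2 * (Δ / (2 * ε)) = Δ / ε := by field_simp
  simpa only [hs, h2s] using log_sub_log_sub_sqrt_mem_Ioc ht hquad

lemma log_div_le_abs_log_mul {Δ ε : ℝ} (hΔ : 0 < Δ) (hε : 0 < ε) (hL : 1 ≤ |log ε|) :
    log (Δ / ε) ≤ |log ε| * (1 + Δ) := by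
  rw [Real.log_div hΔ.ne' hε.ne']
  nlinarith [Real.log_le_sub_one_of_pos hΔ, neg_le_abs (log ε)]

noncomputable def linearGaussian (x : ℝ) : ℝ :=
  (1 + |x|) * exp (-(1 / 4) * x ^ 2)

lemma linearGaussian_nonneg (x : ℝ) : 0 ≤ linearGaussian x := by
  unfold linearGaussian; positivity

lemma integrable_linearGaussian : Integrable linearGaussian := by
  have hexp := integrable_exp_neg_mul_sq (b := 1 / 4) (by norm_num)
  have hmul := (integrable_mul_exp_neg_mul_sq (b := 1 / 4) (by norm_num)).norm
  refine (hexp.add hmul).congr (ae_of_all _ fun x => ?_)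
  simp only [linearGaussian, Pi.add_apply, norm_mul, Real.norm_eq_abs, abs_of_pos (exp_pos _)]
  ring

lemma one_add_sub_le_mul (x y : ℝ) : 1 + (x - y) ≤ (1 + |x|) * (1 + |y|) := by
  nlinarith [le_abs_self x, neg_abs_le y, mul_nonneg (abs_nonneg x) (abs_nonneg y)]

noncomputable def deflationMajorant (p : ℝ × ℝ × ℝ) : ℝ :=
  linearGaussian p.1 * (linearGaussian p.2.1 * (Ioo 0 (π / 2)).indicator 1 p.2.2)

lemma deflationMajorant_nonneg (p : ℝ × ℝ × ℝ) : 0 ≤ deflationMajorant p := by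
  unfold deflationMajorant
  have := linearGaussian_nonneg p.1
  have := linearGaussian_nonneg p.2.1
  have : 0 ≤ (Ioo 0 (π / 2)).indicator (1 : ℝ → ℝ) p.2.2 := indicator_nonneg (by simp) _
  positivity

lemma integrable_deflationMajorant : Integrable deflationMajorant := by
  have hind : Integrable ((Ioo 0 (π / 2)).indicator (1 : ℝ → ℝ)) :=
    (integrable_indicator_iff measurableSet_Ioo).2 (integrableOn_const measure_Ioo_lt_top.ne)
  exact integrable_linearGaussian.mul_prod (integrable_linearGaussian.mul_prod hind)

lemma deflation_integrand_mem_Icc {ε x y θ T : ℝ} (hε : 0 < ε) (hL : 1 ≤ |log ε|)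
    (hxy : y < x) (hθ : θ ∈ Ioo 0 (π / 2)) (hm : ε < (x - y) * cos θ * sin θ)
    (hT : (x - y) * T =
      log (tan θ) - log ((x - y) / (2 * ε) - √((x - y) ^ 2 / (4 * ε ^ 2) - 1))) :
    0 ≤ T * exp (-(x ^ 2 + y ^ 2) / 4) * (x - y) ∧
      T * exp (-(x ^ 2 + y ^ 2) / 4) * (x - y) ≤
        2 * |log ε| * deflationMajorant (x, y, θ) := by
  have hΔ : 0 < x - y := sub_pos.2 hxy
  obtain ⟨hpos, hle⟩ := log_tan_sub_log_root_mem_Ioc hε hθ hm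
  have hexp : exp (-(x ^ 2 + y ^ 2) / 4) = exp (-(1 / 4) * x ^ 2) * exp (-(1 / 4) * y ^ 2) := by
    rw [← exp_add]; ring_nf
  have hmaj : deflationMajorant (x, y, θ) =
      (1 + |x|) * (1 + |y|) * exp (-(x ^ 2 + y ^ 2) / 4) := by
    simp only [deflationMajorant, linearGaussian, indicator_of_mem hθ, Pi.one_apply, hexp]
    ring
  have hτ : (x - y) * T ≤ 2 * (|log ε| * ((1 + |x|) * (1 + |y|))) := by
    have := log_div_le_abs_log_mul hΔ hε hL
    have := one_add_sub_le_mul x y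
    nlinarith [abs_nonneg (log ε)]
  rw [hmaj, show T * exp (-(x ^ 2 + y ^ 2) / 4) * (x - y) =
    (x - y) * T * exp (-(x ^ 2 + y ^ 2) / 4) by ring]
  constructor
  · rw [hT]; positivity
  · nlinarith [exp_pos (-(x ^ 2 + y ^ 2) / 4)]

lemma setIntegral_le_integral_of_le {α : Type*} [MeasurableSpace α] {μ : Measure α}
    {s : Set α} {f g : α → ℝ} (hs : MeasurableSet s) (hg : Integrable g μ) (hg0 : 0 ≤ g)
    (hfg : ∀ x ∈ s, 0 ≤ f x ∧ f x ≤ g x) :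
    ∫ x in s, f x ∂μ ≤ ∫ x, g x ∂μ :=
  (integral_mono_of_nonneg (ae_restrict_of_forall_mem hs fun x hx => (hfg x hx).1)
      hg.restrict (ae_restrict_of_forall_mem hs fun x hx => (hfg x hx).2)).trans
    (setIntegral_le_integral hg (ae_of_all _ hg0))

/-- The expected deflation time of the 2×2 Toda flow over GOE initial data is
`O(|log ε|)` as `ε → 0`. -/
theorem goe_2x2_mean_deflation_time_log_bound
    (m₁₂ : ℝ × ℝ × ℝ → ℝ)
    (hm : ∀ p : ℝ × ℝ × ℝ, m₁₂ p = (p.1 - p.2.1) * Real.cos p.2.2 * Real.sin p.2.2)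
    (τ : ℝ → ℝ × ℝ × ℝ → ℝ)
    (hτ₀ : ∀ ε > (0 : ℝ), ∀ p : ℝ × ℝ × ℝ, m₁₂ p ≤ ε → τ ε p = 0)
    (hτ₁ : ∀ ε > (0 : ℝ), ∀ p : ℝ × ℝ × ℝ, ε < m₁₂ p →
      (p.1 - p.2.1) * τ ε p =
        Real.log (Real.tan p.2.2) -
          Real.log ((p.1 - p.2.1) / (2 * ε) -
            Real.sqrt ((p.1 - p.2.1) ^ 2 / (4 * ε ^ 2) - 1))) :
    ∃ C > (0 : ℝ), ∃ ε₀ > (0 : ℝ), ∀ ε ∈ Set.Ioo (0 : ℝ) ε₀,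
      ∫ p in {p : ℝ × ℝ × ℝ | p.2.1 < p.1 ∧ p.2.2 ∈ Ioo 0 (π / 2)},
          τ ε p * Real.exp (-(p.1 ^ 2 + p.2.1 ^ 2) / 4) * (p.1 - p.2.1) ∂volume
        ≤ C * |Real.log ε| := by
  set I := ∫ p, deflationMajorant p
  have hI : 0 ≤ I := integral_nonneg deflationMajorant_nonneg
  refine ⟨2 * I + 1, by positivity, exp (-1), exp_pos _, fun ε ⟨hε, hε₀⟩ => ?_⟩
  have hL : 1 ≤ |log ε| := by
    have := Real.log_lt_log hε hε₀
    rw [Real.log_exp] at this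
    exact le_abs.2 (Or.inr (by linarith))
  have hS : MeasurableSet {p : ℝ × ℝ × ℝ | p.2.1 < p.1 ∧ p.2.2 ∈ Ioo 0 (π / 2)} :=
    (measurableSet_lt measurable_snd.fst measurable_fst).inter
      (measurableSet_Ioo.preimage measurable_snd.snd)
  calc _ ≤ ∫ p, 2 * |log ε| * deflationMajorant p := by
        refine setIntegral_le_integral_of_le hS
          (integrable_deflationMajorant.const_mul _)
          (fun p => by have := deflationMajorant_nonneg p; positivity) ?_
        rintro ⟨x, y, θ⟩ ⟨hxy, hθ⟩
        rcases le_or_gt (m₁₂ (x, y, θ)) ε with hle | hlt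
        · rw [hτ₀ ε hε _ hle, zero_mul, zero_mul]
          exact ⟨le_rfl, by have := deflationMajorant_nonneg (x, y, θ); positivity⟩
        · exact deflation_integrand_mem_Icc hε hL hxy hθ (hm (x, y, θ) ▸ hlt)
            (hτ₁ ε hε _ hlt)
    _ = 2 * I * |log ε| := by rw [integral_const_mul]; ring
    _ ≤ (2 * I + 1) * |log ε| := by nlinarith
end
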